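/- arXiv:1306.1445 — 8 statements merged into one kernel-verified Lean document; each statement's English description precedes it below -/
import Mathlib

section
/- With n_m := v_m × v_{m+1} and α_m := |v_{m-1} v_m v_{m+1}|, one has |n_{i-1} n_i n_{i+1}| = α_i · α_{i+1}. -/
open Matrix

noncomputable def det3 (a b c : Fin 3 → ℝ) : ℝ := (Matrix.of ![a, b, c]).det

lemma det3_eq_dotProduct_cross (a b c : Fin 3 → ℝ) : det3 a b c = a ⬝ᵥ b ⨯₃ c :=
  (triple_product_eq_det a b c).symm

lemma cross_dotProduct (a b c : Fin 3 → ℝ) : a ⨯₃ b ⬝ᵥ c = a ⬝ᵥ b ⨯₃ c := by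
  rw [dotProduct_comm, triple_product_permutation]

lemma cross_cross_cross_eq_smul (a b c : Fin 3 → ℝ) :
    (a ⨯₃ b) ⨯₃ (b ⨯₃ c) = (a ⬝ᵥ b ⨯₃ c) • b := by
  rw [cross_cross_eq_smul_sub_smul', dot_cross_self, zero_smul, sub_zero, cross_dotProduct]

theorem det3_cross_cross_cross (a b c d : Fin 3 → ℝ) :
    det3 (a ⨯₃ b) (b ⨯₃ c) (c ⨯₃ d) = det3 a b c * det3 b c d := by
  rw [det3_eq_dotProduct_cross, cross_cross_cross_eq_smul, dotProduct_smul, smul_eq_mul,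
    cross_dotProduct, det3_eq_dotProduct_cross, det3_eq_dotProduct_cross, mul_comm]

theorem stmt2 (d : ℕ) [NeZero d] (v n : Fin d → Fin 3 → ℝ) (α : Fin d → ℝ)
    (hn : ∀ m, n m = crossProduct (v m) (v (m + 1)))
    (hα : ∀ m, α m = det3 (v (m - 1)) (v m) (v (m + 1))) (i : Fin d) :
    det3 (n (i - 1)) (n i) (n (i + 1)) = α i * α (i + 1) := by
  rw [hn, hn, hn, hα, hα, sub_add_cancel, add_sub_cancel_right]
  exact det3_cross_cross_cross _ _ _ _
end

section
/- Let v_1,...,v_d be vectors in R^3 such that every three cyclically consecutive vectors v_{i-1}, v_i, v_{i+1} are linearly independent. Then the 2d × 3d matrix M whose first d rows are block-diagonal with blocks v_i^T (row i has v_i^T in block i), and whose last d rows have v_{i+1}^T in block i and v_i^T in block i+1 (cyclically), has rank 2d. -/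
/-!
In a row relation `g ᵥ* M = 0`, the three columns of block `j` only see the coefficients of the
rows `inr (j - 1)`, `inl j` and `inr j`, which multiply `v (j - 1)`, `v j` and `v (j + 1)`
respectively. Linear independence of that triple therefore kills `g (inl j)` and `g (inr j)` for
every `j`, so the `2d` rows of `M` are linearly independent.
-/

open Matrix

section CycleRigidityMatrix

variable {R n : Type*} {d : ℕ} [NeZero d]

def cycleRigidityMatrix [Zero R] (v : Fin d → n → R) : Matrix (Fin d ⊕ Fin d) (Fin d × n) R :=
  of fun r p => match r with
    | .inl i => if p.1 = i then v i p.2 else 0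
    | .inr i => if p.1 = i then v (i + 1) p.2 else if p.1 = i + 1 then v i p.2 else 0

theorem vecMul_cycleRigidityMatrix_apply [CommRing R] [Fintype n] (h1 : (1 : Fin d) ≠ 0)
    (v : Fin d → n → R) (g : Fin d ⊕ Fin d → R) (j : Fin d) (c : n) :
    (g ᵥ* cycleRigidityMatrix v) (j, c) =
      g (.inr (j - 1)) * v (j - 1) c + g (.inl j) * v j c + g (.inr j) * v (j + 1) c := by
  have hsplit : ∀ i, (if j = i then v (i + 1) c else if j = i + 1 then v i c else 0) =
      (if i = j then v (j + 1) c else 0) + (if i = j - 1 then v (j - 1) c else 0) := by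
    intro i
    rcases eq_or_ne i j with rfl | hij
    · have : i ≠ i - 1 := by simpa [eq_sub_iff_add_eq] using h1.symm
      simp [this]
    · rw [if_neg (Ne.symm hij), if_neg hij, zero_add]
      split_ifs with h h' h' <;> grind
  simp only [vecMul, dotProduct, Fintype.sum_sum_type, cycleRigidityMatrix, of_apply, hsplit,
    mul_add, mul_ite, mul_zero, Finset.sum_add_distrib, Finset.sum_ite_eq', Finset.sum_ite_eq,
    Finset.mem_univ, if_true]
  ring

theorem linearIndependent_row_cycleRigidityMatrix [CommRing R] [Fintype n] (h1 : (1 : Fin d) ≠ 0)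
    {v : Fin d → n → R} (hv : ∀ i, LinearIndependent R ![v (i - 1), v i, v (i + 1)]) :
    LinearIndependent R (cycleRigidityMatrix v).row := by
  rw [Fintype.linearIndependent_iff]
  intro g hg
  have hker : g ᵥ* cycleRigidityMatrix v = 0 := by rw [vecMul_eq_sum]; exact hg
  have hlocal : ∀ j, g (.inl j) = 0 ∧ g (.inr j) = 0 := fun j => by
    have := Fintype.linearIndependent_iff.mp (hv j) ![g (.inr (j - 1)), g (.inl j), g (.inr j)] <| by
      ext c
      simpa [Fin.sum_univ_three, ← vecMul_cycleRigidityMatrix_apply h1] using congrFun hker (j, c)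
    exact ⟨this 1, this 2⟩
  rintro (j | j)
  exacts [(hlocal j).1, (hlocal j).2]

theorem rank_cycleRigidityMatrix [Field R] [Fintype n] (h1 : (1 : Fin d) ≠ 0)
    {v : Fin d → n → R} (hv : ∀ i, LinearIndependent R ![v (i - 1), v i, v (i + 1)]) :
    (cycleRigidityMatrix v).rank = 2 * d := by
  rw [(linearIndependent_row_cycleRigidityMatrix h1 hv).rank_matrix]
  simp [two_mul]

end CycleRigidityMatrix

theorem stmt4 (d : ℕ) (hd : 3 ≤ d) [NeZero d] (v : Fin d → Fin 3 → ℝ)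
    (hindep : ∀ i : Fin d, LinearIndependent ℝ ![v (i - 1), v i, v (i + 1)])
    (M : Matrix (Fin d ⊕ Fin d) (Fin d × Fin 3) ℝ)
    (hM1 : ∀ (i j : Fin d) (c : Fin 3), M (Sum.inl i) (j, c) = if j = i then v i c else 0)
    (hM2 : ∀ (i j : Fin d) (c : Fin 3), M (Sum.inr i) (j, c) =
      if j = i then v (i + 1) c else if j = i + 1 then v i c else 0) :
    M.rank = 2 * d := by
  have h1 : (1 : Fin d) ≠ 0 := by
    rw [Ne, Fin.ext_iff, Fin.val_one', Fin.val_zero, Nat.mod_eq_of_lt (by omega)]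
    exact one_ne_zero
  have hM : M = cycleRigidityMatrix v := by
    ext (i | i) ⟨j, c⟩ <;> simp [cycleRigidityMatrix, hM1, hM2]
  rw [hM, rank_cycleRigidityMatrix h1 hindep]
end

section
/- Let v_1,...,v_d ∈ R^3 be such that adjacent normals n_{k-1} = v_{k-1}×v_k and n_k = v_k×v_{k+1} are never parallel, and α_k := |v_{k-1} v_k v_{k+1}| ≠ 0 for all k. Then the d vectors of linear forms Λ_k := (x_{k+1}/α_{k+1}) n_{k+1} − (x_k/α_k) n_{k-1} (elements of the space of triples of linear forms in x_1,...,x_d) are linearly independent over the field. -/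
/-!
The `j`-th coordinate of `∑ k, g k • Λ k` only involves `Λ (j - 1)` and `Λ j`, and equals
`(α j)⁻¹ • (g (j - 1) • n j - g j • n (j - 1))`. Since `n (j - 1)` and `n j` are not parallel,
it vanishes only if `g j = 0`.
-/

open Matrix

open Finset

section CyclicForms

variable {ι K M : Type*} [AddGroup ι] [One ι] [Fintype ι] [DecidableEq ι]
  [DivisionRing K] [AddCommGroup M] [Module K M]

/-- The form `Λ k = (x_{k+1} / α_{k+1}) n_{k+1} - (x_k / α_k) n_{k-1}`, recorded by its
coefficients: `cyclicForms α n k j` is the coefficient of the variable `x_j`. -/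
def cyclicForms (α : ι → K) (n : ι → M) (k : ι) : ι → M :=
  Pi.single (k + 1) ((α (k + 1))⁻¹ • n (k + 1)) - Pi.single k ((α k)⁻¹ • n (k - 1))

theorem sum_smul_cyclicForms_apply (α : ι → K) (n : ι → M) (g : ι → K) (j : ι) :
    (∑ k, g k • cyclicForms α n k) j =
      (g (j - 1) * (α j)⁻¹) • n j - (g j * (α j)⁻¹) • n (j - 1) := by
  have hsucc : ∀ k : ι, (j = k + 1) ↔ (k = j - 1) := fun k => by
    rw [eq_comm, eq_sub_iff_add_eq]
  simp only [cyclicForms, Finset.sum_apply, Pi.smul_apply, Pi.sub_apply, Pi.single_apply, hsucc,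
    smul_sub, smul_ite, smul_zero, sum_sub_distrib, sum_ite_eq, sum_ite_eq', mem_univ, if_true,
    smul_smul, sub_add_cancel]

theorem linearIndependent_cyclicForms {α : ι → K} {n : ι → M} (hα : ∀ m, α m ≠ 0)
    (hn : ∀ k, LinearIndependent K ![n (k - 1), n k]) :
    LinearIndependent K (cyclicForms α n) := by
  refine Fintype.linearIndependent_iff.mpr fun g hg j => ?_
  have hj := congrFun hg j
  rw [sum_smul_cyclicForms_apply, Pi.zero_apply] at hj
  have hcoeff : g j * (α j)⁻¹ = 0 := neg_eq_zero.mp <|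
    (LinearIndependent.pair_iff.mp (hn j) _ _ <| by
      rw [neg_smul, add_comm, ← sub_eq_add_neg, hj]).1
  simpa [hα j] using hcoeff

end CyclicForms

theorem stmt5_general (d : ℕ) [NeZero d] (n : Fin d → Fin 3 → ℝ) (α : Fin d → ℝ)
    (hα0 : ∀ m, α m ≠ 0)
    (hpar : ∀ k : Fin d, LinearIndependent ℝ ![n (k - 1), n k])
    (Λ : Fin d → Fin d → Fin 3 → ℝ)
    (hΛ : ∀ k j : Fin d, Λ k j =
      (if j = k + 1 then (α (k + 1))⁻¹ • n (k + 1) else 0) -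
        (if j = k then (α k)⁻¹ • n (k - 1) else 0)) :
    LinearIndependent ℝ Λ := by
  have hΛ_eq : Λ = cyclicForms α n := by
    funext k j
    simp only [hΛ, cyclicForms, Pi.sub_apply, Pi.single_apply]
  exact hΛ_eq ▸ linearIndependent_cyclicForms hα0 hpar

theorem stmt5 (d : ℕ) (hd : 3 ≤ d) [NeZero d] (v n : Fin d → Fin 3 → ℝ) (α : Fin d → ℝ)
    (hn : ∀ m, n m = crossProduct (v m) (v (m + 1)))
    (hα : ∀ m, α m = det3 (v (m - 1)) (v m) (v (m + 1)))
    (hα0 : ∀ m, α m ≠ 0)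
    (hpar : ∀ k : Fin d, LinearIndependent ℝ ![n (k - 1), n k])
    (Λ : Fin d → Fin d → Fin 3 → ℝ)
    (hΛ : ∀ k j : Fin d, Λ k j =
      (if j = k + 1 then (α (k + 1))⁻¹ • n (k + 1) else 0) -
        (if j = k then (α k)⁻¹ • n (k - 1) else 0)) :
    LinearIndependent ℝ Λ :=
  stmt5_general d n α hα0 hpar Λ hΛ
end

section
/- The Hilbert polynomial of S/I_Γ(d), where I_Γ(d) is the Stanley-Reisner-type ideal ⟨x_1x_3,...,x_1x_{d-1}⟩ + ⟨x_ix_jx_k : 2 ≤ i<j<k ≤ d−1⟩ in k[x_1,...,x_d], equals C(d−3,2)·C(t,2) + (d−3)·C(t+1,2) + C(t+2,2), which simplifies to ((d²−5d+8)/4)t² − ((d²−9d+12)/4)t + 1. -/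
/-!
`I_Γ(d)` is the Stanley–Reisner ideal of the complex `Γ` with minimal nonfaces `{x_1, x_i}`
(`3 ≤ i ≤ d-1`) and the triples among `x_2, …, x_{d-1}`, so the classes of the monomials whose
support is a face of `Γ` form a basis of `S/I_Γ(d)`, and the Hilbert function counts such monomials.
Group them by `U = supp ∩ {x_3, …, x_{d-1}}`, a set with at most two elements. The monomials with
given `U` are exactly the monomials on a three-element vertex set `V ⊇ U` (`{x_1, x_2, x_d}`,
`{x_2, x_i, x_d}` or `{x_i, x_j, x_d}`) that are divisible by `∏_{i ∈ U} x_i`; in degree `t` there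
are `C(t - |U| + 2, 2)` of them, and there are `C(d-3, |U|)` choices of `U`.
-/

open MvPolynomial Finset

section Finsupp

variable {σ : Type*}

theorem sum_single_one_apply [DecidableEq σ] (F : Finset σ) (x : σ) :
    (∑ i ∈ F, Finsupp.single i 1 : σ →₀ ℕ) x = if x ∈ F then 1 else 0 := by
  simp [Finsupp.finsetSum_apply, Finsupp.single_apply]

theorem sum_single_one_le_iff {F : Finset σ} {m : σ →₀ ℕ} :
    ∑ i ∈ F, Finsupp.single i 1 ≤ m ↔ F ⊆ m.support := by
  classical
  simp only [Finsupp.le_def, sum_single_one_apply, subset_iff, Finsupp.mem_support_iff]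
  refine ⟨fun h i hi => ?_, fun h i => ?_⟩
  · simpa [hi, Nat.one_le_iff_ne_zero] using h i
  · split_ifs with hi
    · exact Nat.one_le_iff_ne_zero.mpr (h hi)
    · exact Nat.zero_le _

theorem card_filter_subset_support_finsuppAntidiag [DecidableEq σ] {U V : Finset σ}
    (hUV : U ⊆ V) {n : ℕ} (hn : #U ≤ n) :
    #{m ∈ V.finsuppAntidiag n | U ⊆ m.support} = #(V.finsuppAntidiag (n - #U)) := by
  set e : σ →₀ ℕ := ∑ i ∈ U, Finsupp.single i 1
  have he_sum : ∑ x ∈ V, e x = #U := by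
    simp [e, sum_single_one_apply, inter_eq_right.mpr hUV]
  have he_supp : e.support ⊆ V := fun x hx => hUV (by simpa [e, sum_single_one_apply] using hx)
  refine card_nbij' (· - e) (· + e) ?_ ?_ ?_ ?_
  · intro m hm
    simp only [mem_coe, mem_filter, mem_finsuppAntidiag] at hm ⊢
    obtain ⟨⟨hsum, hsupp⟩, hU⟩ := hm
    have hle := Finsupp.le_def.mp (sum_single_one_le_iff.mpr hU)
    refine ⟨?_, (Finsupp.support_tsub).trans hsupp⟩
    change ∑ x ∈ V, (m x - e x) = n - #U
    rw [sum_tsub_distrib _ fun x _ => hle x, hsum, he_sum]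
  · intro g hg
    simp only [mem_coe, mem_filter, mem_finsuppAntidiag] at hg ⊢
    obtain ⟨hsum, hsupp⟩ := hg
    refine ⟨⟨?_, Finsupp.support_add.trans (union_subset hsupp he_supp)⟩,
      sum_single_one_le_iff.mp le_add_self⟩
    change ∑ x ∈ V, (g x + e x) = n
    rw [sum_add_distrib, hsum, he_sum, Nat.sub_add_cancel hn]
  · intro m hm
    simp only [mem_coe, mem_filter] at hm
    exact tsub_add_cancel_of_le (sum_single_one_le_iff.mpr hm.2)
  · intro g _
    exact add_tsub_cancel_right g e

theorem card_filter_finsuppAntidiag_eq_choose [DecidableEq σ] {P : Finset σ → Prop}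
    [DecidablePred P] {U V W : Finset σ} (hP : ∀ T ⊆ W, P T ↔ U ⊆ T ∧ T ⊆ V) (hUV : U ⊆ V)
    (hVW : V ⊆ W) {n : ℕ} (hn : #U ≤ n) :
    #{m ∈ W.finsuppAntidiag n | P m.support} = (#V + (n - #U) - 1).choose (n - #U) := by
  have hfilter : {m ∈ W.finsuppAntidiag n | P m.support} =
      {m ∈ V.finsuppAntidiag n | U ⊆ m.support} := by
    ext m
    simp only [mem_filter, mem_finsuppAntidiag']
    constructor
    · rintro ⟨⟨hsum, hW⟩, hPm⟩
      have := (hP _ hW).mp hPm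
      exact ⟨⟨hsum, this.2⟩, this.1⟩
    · rintro ⟨⟨hsum, hV⟩, hU⟩
      exact ⟨⟨hsum, hV.trans hVW⟩, (hP _ (hV.trans hVW)).mpr ⟨hU, hV⟩⟩
  rw [hfilter, card_filter_subset_support_finsuppAntidiag hUV hn,
    card_finsuppAntidiag_nat_eq_choose]

end Finsupp

theorem Finset.exists_lt_lt_of_two_lt_card {α : Type*} [LinearOrder α] {s : Finset α}
    (hs : 2 < #s) :
    ∃ a ∈ s, ∃ b ∈ s, ∃ c ∈ s, a < b ∧ b < c := by
  obtain ⟨s', hs's, hs'⟩ := exists_subset_card_eq (show 3 ≤ #s by omega)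
  let f := s'.orderEmbOfFin hs'
  exact ⟨f 0, hs's (s'.orderEmbOfFin_mem hs' 0), f 1, hs's (s'.orderEmbOfFin_mem hs' 1),
    f 2, hs's (s'.orderEmbOfFin_mem hs' 2), f.strictMono (by decide), f.strictMono (by decide)⟩

section MonomialIdeal

variable {σ R : Type*} [Field R]

theorem disjoint_restrictSupport_ker_mk_span_monomial {S A : Set (σ →₀ ℕ)}
    (hA : ∀ m ∈ A, ∀ s ∈ S, ¬ s ≤ m) :
    Disjoint (restrictSupport R A) (LinearMap.ker
      (Ideal.Quotient.mkₐ R (Ideal.span ((monomial · (1 : R)) '' S))).toLinearMap) := by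
  rw [Submodule.disjoint_def]
  intro p hpA hpS
  rw [LinearMap.mem_ker, AlgHom.toLinearMap_apply, Ideal.Quotient.mkₐ_eq_mk,
    Ideal.Quotient.eq_zero_iff_mem, mem_ideal_span_monomial_image] at hpS
  rw [← support_eq_empty, eq_empty_iff_forall_notMem]
  intro m hm
  obtain ⟨s, hs, hsm⟩ := hpS m hm
  exact hA m (hpA hm) s hs hsm

theorem map_restrictSupport_mk_span_monomial (S D : Set (σ →₀ ℕ)) :
    (restrictSupport R D).map
        (Ideal.Quotient.mkₐ R (Ideal.span ((monomial · (1 : R)) '' S))).toLinearMap =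
      (restrictSupport R {m ∈ D | ∀ s ∈ S, ¬ s ≤ m}).map
        (Ideal.Quotient.mkₐ R (Ideal.span ((monomial · (1 : R)) '' S))).toLinearMap := by
  simp only [restrictSupport_eq_span, Submodule.map_span]
  refine le_antisymm ?_
    (Submodule.span_mono (Set.image_mono (Set.image_mono (Set.sep_subset D _))))
  rw [Submodule.span_le]
  rintro _ ⟨_, ⟨m, hm, rfl⟩, rfl⟩
  by_cases hstd : ∀ s ∈ S, ¬ s ≤ m
  · exact Submodule.subset_span ⟨_, ⟨m, ⟨hm, hstd⟩, rfl⟩, rfl⟩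
  · obtain ⟨s, hs, hsm⟩ : ∃ s ∈ S, s ≤ m := by simpa using hstd
    have hmem : monomial m (1 : R) ∈ Ideal.span ((monomial · (1 : R)) '' S) := by
      rw [mem_ideal_span_monomial_image]
      intro m' hm'
      exact ⟨s, hs, mem_singleton.mp (support_monomial_subset hm') ▸ hsm⟩
    rw [SetLike.mem_coe, AlgHom.toLinearMap_apply, Ideal.Quotient.mkₐ_eq_mk,
      Ideal.Quotient.eq_zero_iff_mem.mpr hmem]
    exact zero_mem _

theorem finrank_map_restrictSupport_mk_span_monomial (S D : Set (σ →₀ ℕ))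
    (A : Finset (σ →₀ ℕ)) (hA : ∀ m, m ∈ A ↔ m ∈ D ∧ ∀ s ∈ S, ¬ s ≤ m) :
    Module.finrank R ((restrictSupport R D).map
      (Ideal.Quotient.mkₐ R (Ideal.span ((monomial · (1 : R)) '' S))).toLinearMap) = #A := by
  have hDA : {m ∈ D | ∀ s ∈ S, ¬ s ≤ m} = (A : Set (σ →₀ ℕ)) := by
    ext m; simp [hA]
  rw [map_restrictSupport_mk_span_monomial, hDA, ← LinearMap.range_domRestrict,
    LinearMap.finrank_range_of_inj (LinearMap.injective_domRestrict_iff.mpr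
      (disjoint_restrictSupport_ker_mk_span_monomial fun m hm => ((hA m).mp hm).2)),
    Module.finrank_eq_card_basis (basisRestrictSupport R _)]
  exact Fintype.card_coe A

theorem finrank_map_homogeneousSubmodule_mk_span_prod_X (N : Set (Finset σ)) (n : ℕ)
    (A : Finset (σ →₀ ℕ)) (hA : ∀ m, m ∈ A ↔ m.degree = n ∧ ∀ F ∈ N, ¬ F ⊆ m.support) :
    Module.finrank R ((homogeneousSubmodule σ R n).map
      (Ideal.Quotient.mkₐ R (Ideal.span ((fun F => ∏ i ∈ F, X i) '' N))).toLinearMap) = #A := by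
  have hgen : (fun F : Finset σ => ∏ i ∈ F, (X i : MvPolynomial σ R)) '' N =
      (monomial · (1 : R)) '' ((fun F => ∑ i ∈ F, Finsupp.single i 1) '' N) := by
    rw [Set.image_image]
    simp only [monomial_sum_one, X]
  rw [hgen, homogeneousSubmodule_eq_finsupp_supported]
  refine finrank_map_restrictSupport_mk_span_monomial _ _ A fun m => ?_
  simp [hA, sum_single_one_le_iff]

end MonomialIdeal

namespace Gamma

variable {d : ℕ}

-- Vertex `i : Fin d` is the variable `x_{i+1}`; thus `middle d` below is `{x_3, …, x_{d-1}}`.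
def nonfaces (d : ℕ) : Set (Finset (Fin d)) :=
  {F | (∃ z i : Fin d, (z : ℕ) = 0 ∧ 2 ≤ (i : ℕ) ∧ (i : ℕ) ≤ d - 2 ∧ F = {z, i}) ∨
    ∃ i j l : Fin d, 1 ≤ (i : ℕ) ∧ (i : ℕ) < j ∧ (j : ℕ) < l ∧ (l : ℕ) ≤ d - 2 ∧ F = {i, j, l}}

def IsFace (T : Finset (Fin d)) : Prop := ∀ F ∈ nonfaces d, ¬ F ⊆ T

theorem isFace_iff {T : Finset (Fin d)} : IsFace T ↔
    (∀ z ∈ T, ∀ i ∈ T, ¬ ((z : ℕ) = 0 ∧ 2 ≤ (i : ℕ) ∧ (i : ℕ) ≤ d - 2)) ∧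
    ∀ i ∈ T, ∀ j ∈ T, ∀ l ∈ T, ¬ (1 ≤ (i : ℕ) ∧ (i : ℕ) < j ∧ (j : ℕ) < l ∧ (l : ℕ) ≤ d - 2) := by
  simp only [IsFace, nonfaces, Set.mem_ofPred_eq]
  constructor
  · intro h
    refine ⟨fun z hz i hi ⟨hz0, hi2, hid⟩ => h _ (Or.inl ⟨z, i, hz0, hi2, hid, rfl⟩) ?_,
      fun i hi j hj l hl ⟨hi1, hij, hjl, hld⟩ => h _ (Or.inr ⟨i, j, l, hi1, hij, hjl, hld, rfl⟩) ?_⟩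
    · simp [insert_subset_iff, hz, hi]
    · simp [insert_subset_iff, hi, hj, hl]
  · rintro ⟨h₁, h₂⟩ F (⟨z, i, hz, hi, hid, rfl⟩ | ⟨i, j, l, hi, hij, hjl, hld, rfl⟩) hF <;>
      simp only [insert_subset_iff, singleton_subset_iff] at hF
    · exact h₁ z hF.1 i hF.2 ⟨hz, hi, hid⟩
    · exact h₂ i hF.1 j hF.2.1 l hF.2.2 ⟨hi, hij, hjl, hld⟩

def middle (d : ℕ) : Finset (Fin d) := {i | 2 ≤ (i : ℕ) ∧ (i : ℕ) ≤ d - 2}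

theorem mem_middle {i : Fin d} : i ∈ middle d ↔ 2 ≤ (i : ℕ) ∧ (i : ℕ) ≤ d - 2 := by
  simp [middle]

theorem card_middle : #(middle d) = d - 3 := by
  have : (middle d).map Fin.valEmbedding = Icc 2 (d - 2) := by
    ext n
    simp only [middle, mem_map, mem_filter, mem_univ, true_and, Fin.valEmbedding_apply, mem_Icc]
    constructor
    · rintro ⟨i, hi, rfl⟩
      exact hi
    · intro hn
      exact ⟨⟨n, by omega⟩, hn, rfl⟩
  rw [← card_map, this, Nat.card_Icc]
  omega

theorem subset_triple_iff {T : Finset (Fin d)} {a b c : Fin d} :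
    T ⊆ {a, b, c} ↔ ∀ x ∈ T, (x : ℕ) = a ∨ (x : ℕ) = b ∨ (x : ℕ) = c := by
  simp [subset_iff, Fin.ext_iff]

theorem isFace_and_inter_middle_eq_empty_iff {z o w : Fin d} (hz : (z : ℕ) = 0)
    (ho : (o : ℕ) = 1) (hw : (w : ℕ) = d - 1) {T : Finset (Fin d)} :
    IsFace T ∧ T ∩ middle d = ∅ ↔ ∅ ⊆ T ∧ T ⊆ {z, o, w} := by
  simp only [isFace_iff, subset_triple_iff, empty_subset, true_and, eq_empty_iff_forall_notMem,
    mem_inter, mem_middle, not_and]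
  constructor
  · rintro ⟨-, h⟩ x hx
    have := h x hx
    omega
  · intro hT
    refine ⟨⟨fun _ _ i hi => ?_, fun _ _ j hj _ _ => ?_⟩, fun x hx => ?_⟩
    · have := hT i hi; omega
    · have := hT j hj; omega
    · have := hT x hx; omega

theorem isFace_and_inter_middle_eq_singleton_iff {o w i : Fin d} (ho : (o : ℕ) = 1)
    (hw : (w : ℕ) = d - 1) (hi : i ∈ middle d) {T : Finset (Fin d)} :
    IsFace T ∧ T ∩ middle d = {i} ↔ {i} ⊆ T ∧ T ⊆ {o, i, w} := by
  rw [mem_middle] at hi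
  simp only [isFace_iff, subset_triple_iff, singleton_subset_iff, Finset.ext_iff, mem_inter,
    mem_middle, mem_singleton, Fin.ext_iff]
  constructor
  · rintro ⟨⟨h₁, -⟩, h⟩
    have hiT := ((h i).mpr rfl).1
    refine ⟨hiT, fun x hx => ?_⟩
    have := h₁ x hx i hiT
    by_cases hxm : 2 ≤ (x : ℕ) ∧ (x : ℕ) ≤ d - 2
    · have := (h x).mp ⟨hx, hxm⟩; omega
    · omega
  · rintro ⟨hiT, hT⟩
    refine ⟨⟨fun a ha b hb => ?_, fun a ha b hb c hc => ?_⟩,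
      fun x => ⟨fun hx => ?_, fun hx => ?_⟩⟩
    · have := hT a ha; have := hT b hb; omega
    · have := hT a ha; have := hT b hb; have := hT c hc; omega
    · have := hT x hx.1; omega
    · exact ⟨Fin.ext hx ▸ hiT, by omega⟩

theorem isFace_and_inter_middle_eq_pair_iff {w i j : Fin d} (hw : (w : ℕ) = d - 1)
    (hi : i ∈ middle d) (hj : j ∈ middle d) (hij : i < j) {T : Finset (Fin d)} :
    IsFace T ∧ T ∩ middle d = {i, j} ↔ {i, j} ⊆ T ∧ T ⊆ {i, j, w} := by
  rw [mem_middle] at hi hj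
  rw [Fin.lt_def] at hij
  simp only [isFace_iff, subset_triple_iff, insert_subset_iff, singleton_subset_iff,
    Finset.ext_iff, mem_inter, mem_middle, mem_insert, mem_singleton, Fin.ext_iff]
  constructor
  · rintro ⟨⟨h₁, h₂⟩, h⟩
    have hiT := ((h i).mpr (Or.inl rfl)).1
    have hjT := ((h j).mpr (Or.inr rfl)).1
    refine ⟨⟨hiT, hjT⟩, fun x hx => ?_⟩
    have := h₁ x hx i hiT
    have := h₂ x hx i hiT j hjT
    by_cases hxm : 2 ≤ (x : ℕ) ∧ (x : ℕ) ≤ d - 2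
    · have := (h x).mp ⟨hx, hxm⟩; omega
    · omega
  · rintro ⟨⟨hiT, hjT⟩, hT⟩
    refine ⟨⟨fun a ha b hb => ?_, fun a ha b hb c hc => ?_⟩,
      fun x => ⟨fun hx => ?_, fun hx => ?_⟩⟩
    · have := hT a ha; have := hT b hb; omega
    · have := hT a ha; have := hT b hb; have := hT c hc; omega
    · have := hT x hx.1; omega
    · rcases hx with hx | hx
      · exact ⟨Fin.ext hx ▸ hiT, by omega⟩
      · exact ⟨Fin.ext hx ▸ hjT, by omega⟩

theorem card_inter_middle_le_two {T : Finset (Fin d)} (hT : IsFace T) : #(T ∩ middle d) ≤ 2 := by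
  by_contra! h
  obtain ⟨a, ha, b, hb, c, hc, hab, hbc⟩ := exists_lt_lt_of_two_lt_card h
  simp only [mem_inter, mem_middle] at ha hb hc
  exact (isFace_iff.mp hT).2 a ha.1 b hb.1 c hc.1 ⟨by omega, hab, hbc, hc.2.2⟩

open Classical in
noncomputable def faceMonomials (d t : ℕ) : Finset (Fin d →₀ ℕ) :=
  {m ∈ univ.finsuppAntidiag t | IsFace m.support}

theorem mem_faceMonomials {t : ℕ} {m : Fin d →₀ ℕ} :
    m ∈ faceMonomials d t ↔ m.degree = t ∧ IsFace m.support := by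
  simp [faceMonomials, Finsupp.degree_eq_sum]

theorem exists_card_eq_three_isFace_and_inter_middle_eq_iff (hd : 3 ≤ d) {U : Finset (Fin d)}
    (hU : U ⊆ middle d) (hU2 : #U ≤ 2) :
    ∃ V : Finset (Fin d), U ⊆ V ∧ #V = 3 ∧
      ∀ T, IsFace T ∧ T ∩ middle d = U ↔ U ⊆ T ∧ T ⊆ V := by
  obtain ⟨z, hz⟩ : ∃ z : Fin d, (z : ℕ) = 0 := ⟨⟨0, by omega⟩, rfl⟩
  obtain ⟨o, ho⟩ : ∃ o : Fin d, (o : ℕ) = 1 := ⟨⟨1, by omega⟩, rfl⟩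
  obtain ⟨w, hw⟩ : ∃ w : Fin d, (w : ℕ) = d - 1 := ⟨⟨d - 1, by omega⟩, rfl⟩
  have card_triple {a b c : Fin d} (hab : (a : ℕ) ≠ b) (hac : (a : ℕ) ≠ c) (hbc : (b : ℕ) ≠ c) :
      #({a, b, c} : Finset (Fin d)) = 3 :=
    card_eq_three.mpr ⟨a, b, c, Fin.ne_of_val_ne hab, Fin.ne_of_val_ne hac,
      Fin.ne_of_val_ne hbc, rfl⟩
  obtain h | h | h : #U = 0 ∨ #U = 1 ∨ #U = 2 := by omega
  · obtain rfl := card_eq_zero.mp h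
    exact ⟨{z, o, w}, empty_subset _, card_triple (by omega) (by omega) (by omega),
      fun T => isFace_and_inter_middle_eq_empty_iff hz ho hw⟩
  · obtain ⟨i, rfl⟩ := card_eq_one.mp h
    have hi := singleton_subset_iff.mp hU
    have hi' := mem_middle.mp hi
    exact ⟨{o, i, w}, by simp, card_triple (by omega) (by omega) (by omega),
      fun T => isFace_and_inter_middle_eq_singleton_iff ho hw hi⟩
  · obtain ⟨a, b, hab, rfl⟩ := card_eq_two.mp h
    obtain ⟨i, j, hij, hab_eq⟩ : ∃ i j, i < j ∧ ({a, b} : Finset (Fin d)) = {i, j} := by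
      rcases lt_or_gt_of_ne hab with hlt | hlt
      · exact ⟨a, b, hlt, rfl⟩
      · exact ⟨b, a, hlt, pair_comm a b⟩
    rw [hab_eq] at hU ⊢
    have hi := hU (mem_insert_self i {j})
    have hj := hU (mem_insert_of_mem (mem_singleton_self j))
    have hi' := mem_middle.mp hi
    have hj' := mem_middle.mp hj
    have hij' := Fin.lt_def.mp hij
    exact ⟨{i, j, w}, by simp [insert_subset_iff], card_triple (by omega) (by omega) (by omega),
      fun T => isFace_and_inter_middle_eq_pair_iff hw hi hj hij⟩

theorem card_filter_faceMonomials_inter_middle_eq (hd : 3 ≤ d) {t : ℕ} (ht : 2 ≤ t)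
    {U : Finset (Fin d)} (hU : U ⊆ middle d) (hU2 : #U ≤ 2) :
    #{m ∈ faceMonomials d t | m.support ∩ middle d = U} = (t - #U + 2).choose 2 := by
  classical
  obtain ⟨V, hUV, hV, hcell⟩ := exists_card_eq_three_isFace_and_inter_middle_eq_iff hd hU hU2
  rw [faceMonomials, filter_filter, card_filter_finsuppAntidiag_eq_choose (fun T _ => hcell T)
    hUV (subset_univ V) (by omega), hV, show 3 + (t - #U) - 1 = t - #U + 2 by omega,
    Nat.choose_symm_add]

theorem card_faceMonomials (hd : 3 ≤ d) {t : ℕ} (ht : 2 ≤ t) :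
    #(faceMonomials d t) =
      (d - 3).choose 2 * t.choose 2 + (d - 3) * (t + 1).choose 2 + (t + 2).choose 2 := by
  classical
  set P := {U ∈ (middle d).powerset | #U ≤ 2}
  have hmaps : ∀ m ∈ faceMonomials d t, m.support ∩ middle d ∈ P := fun m hm =>
    mem_filter.mpr ⟨mem_powerset.mpr inter_subset_right,
      card_inter_middle_le_two (mem_faceMonomials.mp hm).2⟩
  have hP_card : ∀ U ∈ P, #U ∈ range 3 := fun U hU =>
    mem_range.mpr (Nat.lt_succ_of_le (mem_filter.mp hU).2)
  have hfiber : ∀ k ∈ range 3,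
      ∑ U ∈ P with #U = k, (t - #U + 2).choose 2 = (d - 3).choose k * (t - k + 2).choose 2 := by
    intro k hk
    rw [sum_const_nat fun U hU => by rw [(mem_filter.mp hU).2], filter_filter, ← card_middle,
      ← card_powersetCard, powersetCard_eq_filter]
    congr 2
    exact filter_congr fun U _ => by simp only [mem_range] at hk; omega
  rw [card_eq_sum_card_fiberwise hmaps, sum_congr rfl fun U hU =>
      card_filter_faceMonomials_inter_middle_eq hd ht (mem_powerset.mp (mem_filter.mp hU).1)
        (mem_filter.mp hU).2,
    ← sum_fiberwise_of_maps_to hP_card, sum_congr rfl hfiber]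
  simp only [sum_range_succ, sum_range_zero, Nat.choose_zero_right, Nat.choose_one_right]
  rw [Nat.sub_zero, show t - 1 + 2 = t + 1 by omega, show t - 2 + 2 = t by omega]
  ring

theorem generators_eq_image_prod_X_nonfaces {R : Type*} [CommSemiring R] (h0 : 0 < d) :
    ({p | ∃ i : Fin d, 2 ≤ (i : ℕ) ∧ (i : ℕ) ≤ d - 2 ∧ p = X ⟨0, h0⟩ * X i} ∪
      {p | ∃ i j l : Fin d, 1 ≤ (i : ℕ) ∧ (i : ℕ) < (j : ℕ) ∧ (j : ℕ) < (l : ℕ) ∧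
        (l : ℕ) ≤ d - 2 ∧ p = X i * X j * X l} : Set (MvPolynomial (Fin d) R)) =
      (fun F => ∏ i ∈ F, X i) '' nonfaces d := by
  ext p
  simp only [nonfaces, Set.mem_union, Set.mem_ofPred_eq, Set.mem_image]
  constructor
  · rintro (⟨i, hi, hid, rfl⟩ | ⟨i, j, l, hi, hij, hjl, hld, rfl⟩)
    · exact ⟨_, Or.inl ⟨_, i, rfl, hi, hid, rfl⟩, prod_pair (Fin.ne_of_val_ne (by simp; omega))⟩
    · refine ⟨_, Or.inr ⟨i, j, l, hi, hij, hjl, hld, rfl⟩, ?_⟩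
      rw [prod_insert (by simp [Fin.ext_iff]; omega), prod_pair (Fin.ne_of_val_ne (by omega)),
        mul_assoc]
  · rintro ⟨F, ⟨z, i, hz, hi, hid, rfl⟩ | ⟨i, j, l, hi, hij, hjl, hld, rfl⟩, rfl⟩
    · obtain rfl : z = ⟨0, h0⟩ := Fin.ext hz
      exact Or.inl ⟨i, hi, hid, prod_pair (Fin.ne_of_val_ne (by simp; omega))⟩
    · refine Or.inr ⟨i, j, l, hi, hij, hjl, hld, ?_⟩
      rw [prod_insert (by simp [Fin.ext_iff]; omega), prod_pair (Fin.ne_of_val_ne (by omega)),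
        mul_assoc]

end Gamma

theorem choose_two_combination_eq (d t : ℕ) (hd : 3 ≤ d) :
    (Nat.choose (d - 3) 2 : ℚ) * Nat.choose t 2 + ((d : ℚ) - 3) * Nat.choose (t + 1) 2
        + Nat.choose (t + 2) 2 =
      (((d : ℚ) ^ 2 - 5 * d + 8) / 4) * t ^ 2 - (((d : ℚ) ^ 2 - 9 * d + 12) / 4) * t + 1 := by
  simp only [Nat.cast_choose_two]
  push_cast [hd]
  ring

/-- Variables `X 0, …, X (d-1)` correspond to `x_1, …, x_d`. -/
theorem stmt10 (d : ℕ) (hd : 4 ≤ d) (k : Type*) [Field k]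
    (I : Ideal (MvPolynomial (Fin d) k))
    (hI : I = Ideal.span
      ({p | ∃ i : Fin d, 2 ≤ (i : ℕ) ∧ (i : ℕ) ≤ d - 2 ∧ p = X ⟨0, by omega⟩ * X i} ∪
       {p | ∃ i j l : Fin d, 1 ≤ (i : ℕ) ∧ (i : ℕ) < (j : ℕ) ∧ (j : ℕ) < (l : ℕ) ∧
          (l : ℕ) ≤ d - 2 ∧ p = X i * X j * X l})) :
    (∃ N : ℕ, ∀ t : ℕ, N ≤ t →
      (Module.finrank k ((MvPolynomial.homogeneousSubmodule (Fin d) k t).map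
          (Ideal.Quotient.mkₐ k I).toLinearMap))
        = Nat.choose (d - 3) 2 * Nat.choose t 2 + (d - 3) * Nat.choose (t + 1) 2
            + Nat.choose (t + 2) 2) ∧
    ∀ t : ℕ, (Nat.choose (d - 3) 2 : ℚ) * Nat.choose t 2
        + ((d : ℚ) - 3) * Nat.choose (t + 1) 2 + Nat.choose (t + 2) 2
      = (((d : ℚ) ^ 2 - 5 * d + 8) / 4) * t ^ 2 - (((d : ℚ) ^ 2 - 9 * d + 12) / 4) * t + 1 := by
  refine ⟨⟨2, fun t ht => ?_⟩, fun t => choose_two_combination_eq d t (by omega)⟩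
  rw [hI, Gamma.generators_eq_image_prod_X_nonfaces,
    finrank_map_homogeneousSubmodule_mk_span_prod_X _ t _ fun m => Gamma.mem_faceMonomials,
    Gamma.card_faceMonomials (by omega) ht]
end

section
/- In k[x,y,z], let F be a form of degree d−3 and f_1,...,f_{d-3} forms of degree d−2 such that I = ⟨f_1,...,f_{d-3},F⟩ has a Hilbert–Burch resolution 0 → R(−d+1)^{d−3} → R(−d+3)⊕R(−d+2)^{d−3} → R → R/I → 0. Then the ideal L = ⟨f_1,...,f_{d-3}, xF, yF, zF⟩ has a free resolution of the form 0 → R(−d) → R(−d+1)^d → R(−d+2)^d → R → R/L → 0; in particular L has d minimal generators of degree d−2, d linear first syzygies, and one linear second syzygy. -/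
/-!
The quadratic last row of the Hilbert–Burch matrix of `I` factors as `(x, y, z) · Q` with `Q`
linear. Replacing that row by the three linear rows of `Q` and adding the Koszul syzygies
`w ↦ w × (x, y, z)` of `xF, yF, zF` gives the linear syzygy matrix of `L`; its kernel is spanned by
`(0, x, y, z)`. Every exactness statement then splits into exactness of the Hilbert–Burch complex
of `I` and of the Koszul complex of `x, y, z`.
-/

open MvPolynomial Matrix Function

/-- Exactness of the Koszul complex `0 → R → R³ → R³ → R` of `x`. -/
structure IsKoszulRegular {R : Type*} [CommRing R] (x : Fin 3 → R) : Prop where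
  smul_injective : Injective fun r : R => r • x
  exact_smul_cross : Exact (fun r : R => r • x) (· ⨯₃ x)
  exact_cross_dotProduct : Exact (· ⨯₃ x) (x ⬝ᵥ ·)

theorem IsKoszulRegular.injective_smul_sum_elim_zero {R κ : Type*} [CommRing R] {x : Fin 3 → R}
    (hx : IsKoszulRegular x) : Injective fun r : R => Sum.elim (0 : κ → R) (r • x) :=
  fun _ _ h => hx.smul_injective <| funext fun c => by simpa using congrFun h (Sum.inr c)

section LiftedSyzygies

variable {R : Type*} [CommRing R] {ι κ : Type*} [Fintype κ]

def crossMatrix (x : Fin 3 → R) : Matrix (Fin 3) (Fin 3) R :=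
  !![0, x 2, -x 1; -x 2, 0, x 0; x 1, -x 0, 0]

theorem crossMatrix_mulVec (x w : Fin 3 → R) : crossMatrix x *ᵥ w = w ⨯₃ x := by
  funext a
  fin_cases a <;> simp [crossMatrix, cross_apply, mulVec, vecHead, vecTail] <;> ring

def liftedSyzygyMatrix (B : Matrix (ι ⊕ Unit) κ R) (Q : Matrix (Fin 3) κ R) (x : Fin 3 → R) :
    Matrix (ι ⊕ Fin 3) (κ ⊕ Fin 3) R :=
  fromBlocks (B.submatrix Sum.inl id) 0 Q (crossMatrix x)

/-- Turns a relation among `f, x₀F, x₁F, x₂F` into one among `f, F`. -/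
def collapse (x : Fin 3 → R) (g : ι ⊕ Fin 3 → R) : ι ⊕ Unit → R :=
  Sum.elim (g ∘ Sum.inl) fun _ => x ⬝ᵥ (g ∘ Sum.inr)

variable {B : Matrix (ι ⊕ Unit) κ R} {Q : Matrix (Fin 3) κ R} {x : Fin 3 → R}

theorem liftedSyzygyMatrix_mulVec (v : κ ⊕ Fin 3 → R) :
    liftedSyzygyMatrix B Q x *ᵥ v =
      Sum.elim (B.submatrix Sum.inl id *ᵥ (v ∘ Sum.inl))
        (Q *ᵥ (v ∘ Sum.inl) + (v ∘ Sum.inr) ⨯₃ x) := by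
  rw [liftedSyzygyMatrix, fromBlocks_mulVec, zero_mulVec, add_zero, crossMatrix_mulVec]

@[simp]
theorem collapse_zero : collapse x (0 : ι ⊕ Fin 3 → R) = 0 := by
  funext s
  cases s <;> simp [collapse]

theorem mulVec_inr_eq_dotProduct_mulVec (hQ : B (Sum.inr ()) = x ᵥ* Q) (c : κ → R) :
    (B *ᵥ c) (Sum.inr ()) = x ⬝ᵥ (Q *ᵥ c) := by
  rw [mulVec, hQ, dotProduct_mulVec]

theorem collapse_liftedSyzygyMatrix_mulVec (hQ : B (Sum.inr ()) = x ᵥ* Q) (v : κ ⊕ Fin 3 → R) :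
    collapse x (liftedSyzygyMatrix B Q x *ᵥ v) = B *ᵥ (v ∘ Sum.inl) := by
  funext s
  rcases s with i | ⟨⟩
  · simp [collapse, liftedSyzygyMatrix_mulVec, mulVec]
  · simp [collapse, liftedSyzygyMatrix_mulVec, dotProduct_add, dot_cross_self,
      mulVec_inr_eq_dotProduct_mulVec hQ]

variable (hx : IsKoszulRegular x) (hQ : B (Sum.inr ()) = x ᵥ* Q)
include hx hQ

theorem exact_smul_liftedSyzygyMatrix (hinj : Injective (B *ᵥ ·)) :
    Exact (fun r : R => Sum.elim (0 : κ → R) (r • x)) (liftedSyzygyMatrix B Q x *ᵥ ·) := by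
  intro v
  constructor
  · intro hv
    have hl : v ∘ Sum.inl = 0 := hinj <| by
      dsimp only at hv ⊢
      rw [← collapse_liftedSyzygyMatrix_mulVec hQ, hv, collapse_zero, mulVec_zero]
    have hcross : (v ∘ Sum.inr) ⨯₃ x = 0 := by
      simpa [liftedSyzygyMatrix_mulVec, hl] using congrArg (· ∘ Sum.inr) hv
    obtain ⟨r, hr⟩ := (hx.exact_smul_cross _).mp hcross
    refine ⟨r, ?_⟩
    rw [← Sum.elim_comp_inl_inr v, hl, ← hr]
  · rintro ⟨r, rfl⟩
    dsimp only
    rw [liftedSyzygyMatrix_mulVec, Sum.elim_comp_inl, Sum.elim_comp_inr, mulVec_zero, mulVec_zero,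
      zero_add, hx.exact_smul_cross.apply_apply_eq_zero r, Sum.elim_zero_zero]

theorem exact_liftedSyzygyMatrix_mulVec [Fintype ι] {f : ι → R} {F : R}
    (hex : Exact (B *ᵥ ·) fun g => (∑ i, g (Sum.inl i) * f i) + g (Sum.inr ()) * F) :
    Exact (liftedSyzygyMatrix B Q x *ᵥ ·)
      fun g => (∑ i, g (Sum.inl i) * f i) + ∑ c, g (Sum.inr c) * (x c * F) := by
  intro g
  have hcollapse : (∑ i, g (Sum.inl i) * f i) + ∑ c, g (Sum.inr c) * (x c * F) =
      (∑ i, collapse x g (Sum.inl i) * f i) + collapse x g (Sum.inr ()) * F := by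
    simp [collapse, dotProduct, Finset.sum_mul, mul_assoc, mul_left_comm]
  dsimp only
  rw [hcollapse]
  constructor
  · intro hg
    obtain ⟨c, hc⟩ := (hex _).mp hg
    dsimp only at hc
    have hl : g ∘ Sum.inl = B.submatrix Sum.inl id *ᵥ c :=
      funext fun i => (congrFun hc (Sum.inl i)).symm
    have hr : x ⬝ᵥ (g ∘ Sum.inr - Q *ᵥ c) = 0 := by
      rw [dotProduct_sub, ← mulVec_inr_eq_dotProduct_mulVec hQ, hc]
      exact sub_self _
    obtain ⟨w, hw⟩ := (hx.exact_cross_dotProduct _).mp hr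
    refine ⟨Sum.elim c w, ?_⟩
    dsimp only at hw ⊢
    rw [liftedSyzygyMatrix_mulVec, Sum.elim_comp_inl, Sum.elim_comp_inr, hw, ← hl,
      add_sub_cancel, Sum.elim_comp_inl_inr]
  · rintro ⟨v, rfl⟩
    rw [collapse_liftedSyzygyMatrix_mulVec hQ]
    exact (hex _).mpr ⟨_, rfl⟩

end LiftedSyzygies

namespace MvPolynomial

variable {σ R : Type*} [CommRing R]

attribute [local instance] MvPolynomial.gradedAlgebra in
theorem homogeneousComponent_X_mul (i : σ) (n : ℕ) (q : MvPolynomial σ R) :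
    homogeneousComponent (n + 1) (X i * q) = X i * homogeneousComponent n q := by
  rw [← decomposition.decompose'_apply, ← decomposition.decompose'_apply, add_comm]
  exact DirectSum.coe_decompose_mul_add_of_left_mem (homogeneousSubmodule σ R)
    (isHomogeneous_X R i)

theorem IsHomogeneous.exists_eq_sum_X_mul [Fintype σ] {p : MvPolynomial σ R} {n : ℕ}
    (hp : p.IsHomogeneous (n + 1)) :
    ∃ Q : σ → MvPolynomial σ R, (∀ i, (Q i).IsHomogeneous n) ∧ p = ∑ i, X i * Q i := by
  have hmem : p ∈ idealOfVars σ R := by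
    rw [← pow_one (idealOfVars σ R), mem_pow_idealOfVars_iff]
    intro m hm
    rw [Finsupp.degree_eq_weight_one]
    exact (hp (mem_support_iff.mp hm)).symm ▸ Nat.le_add_left 1 n
  obtain ⟨Q, hQ⟩ := Ideal.mem_span_range_iff_exists_fun.mp hmem
  refine ⟨fun i => homogeneousComponent n (Q i), fun i => homogeneousComponent_isHomogeneous _ _,
    ?_⟩
  rw [← homogeneousComponent_eq_self hp, ← hQ, map_sum]
  simp only [mul_comm _ (X _), homogeneousComponent_X_mul]

variable [DecidableEq σ]

noncomputable def killVar (i : σ) : MvPolynomial σ R →ₐ[R] MvPolynomial σ R :=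
  aeval (Function.update X i 0)

@[simp]
theorem killVar_X_self (i : σ) : killVar i (X i : MvPolynomial σ R) = 0 := by
  simp [killVar]

@[simp]
theorem killVar_X_of_ne {i j : σ} (h : j ≠ i) : killVar i (X j : MvPolynomial σ R) = X j := by
  simp [killVar, Function.update_of_ne h]

theorem X_dvd_sub_killVar (i : σ) (p : MvPolynomial σ R) : X i ∣ p - killVar i p := by
  induction p using MvPolynomial.induction_on with
  | C a => simp [killVar]
  | add p q hp hq => simpa [sub_add_sub_comm] using dvd_add hp hq
  | mul_X p j hp =>
    obtain rfl | hj := eq_or_ne j i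
    · simp
    · rw [map_mul, killVar_X_of_ne hj, ← sub_mul]
      exact dvd_mul_of_dvd_left hp _

theorem exists_eq_X_mul_of_X_mul_eq_X_mul {i j : σ} (hij : i ≠ j) {a b : MvPolynomial σ R}
    (h : X i * a = X j * b) : ∃ c, a = X j * c ∧ b = X i * c := by
  have hka : killVar j a = 0 := by
    simpa [killVar_X_of_ne hij, isRegular_X.left.mul_left_eq_zero_iff] using
      congrArg (killVar j) h
  obtain ⟨c, hc⟩ := X_dvd_sub_killVar j a
  rw [hka, sub_zero] at hc
  refine ⟨c, hc, isRegular_X.left (?_ : X j * b = X j * (X i * c))⟩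
  rw [← h, hc]
  ring

theorem exists_eq_cross_X_of_dotProduct_X_eq_zero {g : Fin 3 → MvPolynomial (Fin 3) R}
    (hg : X ⬝ᵥ g = 0) : ∃ w, g = w ⨯₃ X := by
  rw [vec3_dotProduct] at hg
  obtain ⟨h₁, e₁⟩ := X_dvd_sub_killVar 0 (g 1)
  obtain ⟨h₂, e₂⟩ := X_dvd_sub_killVar 0 (g 2)
  -- modulo `X 0` the relation only involves `X 1` and `X 2`
  obtain ⟨c, hc₁, hc₂⟩ : ∃ c, killVar 0 (g 1) = X 2 * c ∧ -killVar 0 (g 2) = X 1 * c := by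
    refine exists_eq_X_mul_of_X_mul_eq_X_mul (by decide) ?_
    have := congrArg (killVar 0) hg
    simp only [map_add, map_mul, map_zero, killVar_X_self, zero_mul, zero_add,
      killVar_X_of_ne (by decide : (1 : Fin 3) ≠ 0),
      killVar_X_of_ne (by decide : (2 : Fin 3) ≠ 0)] at this
    linear_combination this
  have e₀ : g 0 = -(X 1 * h₁) - X 2 * h₂ := (isRegular_X (n := 0)).left <| by
    linear_combination hg - X 1 * e₁ - X 2 * e₂ - X 1 * hc₁ + X 2 * hc₂
  refine ⟨![-c, -h₂, h₁], ?_⟩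
  funext a
  fin_cases a <;> simp [cross_apply]
  · linear_combination e₀
  · linear_combination e₁ + hc₁
  · linear_combination e₂ - hc₂

theorem exists_eq_smul_X_of_cross_X_eq_zero {w : Fin 3 → MvPolynomial (Fin 3) R}
    (hw : w ⨯₃ X = 0) : ∃ r : MvPolynomial (Fin 3) R, w = r • X := by
  have h₁ : w 2 * X 0 - w 0 * X 2 = 0 := congrFun hw 1
  have h₂ : w 0 * X 1 - w 1 * X 0 = 0 := congrFun hw 2
  obtain ⟨r, hr₀, hr₁⟩ := exists_eq_X_mul_of_X_mul_eq_X_mul (i := 1) (j := 0) (by decide)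
    (a := w 0) (b := w 1) (by linear_combination h₂)
  have hr₂ : w 2 = X 2 * r := (isRegular_X (n := 0)).left <| by
    linear_combination h₁ + X 2 * hr₀
  refine ⟨r, ?_⟩
  funext a
  fin_cases a <;> simp [hr₀, hr₁, hr₂, mul_comm]

theorem isKoszulRegular_X : IsKoszulRegular (X : Fin 3 → MvPolynomial (Fin 3) R) where
  smul_injective _ _ h := (isRegular_X (n := 0)).right (by simpa using congrFun h 0)
  exact_smul_cross w := ⟨fun hw => exists_eq_smul_X_of_cross_X_eq_zero hw |>.imp fun _ => Eq.symm,
    by rintro ⟨r, rfl⟩; simp [cross_self]⟩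
  exact_cross_dotProduct g := ⟨fun hg => exists_eq_cross_X_of_dotProduct_X_eq_zero hg |>.imp
    fun _ => Eq.symm, by rintro ⟨w, rfl⟩; exact dot_cross_self _ _⟩

theorem isHomogeneous_sum_elim_zero_X {κ : Type*} (s : κ ⊕ Fin 3) :
    (Sum.elim (0 : κ → MvPolynomial (Fin 3) R) X s).IsHomogeneous 1 := by
  rcases s with _ | a
  exacts [isHomogeneous_zero _ _ _, isHomogeneous_X _ a]

theorem isHomogeneous_crossMatrix_X (a b : Fin 3) :
    (crossMatrix (X : Fin 3 → MvPolynomial (Fin 3) R) a b).IsHomogeneous 1 := by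
  fin_cases a <;> fin_cases b <;>
    simp [crossMatrix, isHomogeneous_zero, isHomogeneous_X, IsHomogeneous.neg]

theorem isHomogeneous_liftedSyzygyMatrix_X {ι κ : Type*}
    {B : Matrix (ι ⊕ Unit) κ (MvPolynomial (Fin 3) R)}
    {Q : Matrix (Fin 3) κ (MvPolynomial (Fin 3) R)}
    (hB : ∀ i j, (B (Sum.inl i) j).IsHomogeneous 1) (hQ : ∀ a j, (Q a j).IsHomogeneous 1)
    (s : ι ⊕ Fin 3) (t : κ ⊕ Fin 3) : (liftedSyzygyMatrix B Q X s t).IsHomogeneous 1 := by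
  rcases s with i | a <;> rcases t with j | b
  exacts [hB i j, isHomogeneous_zero _ _ _, hQ a j, isHomogeneous_crossMatrix_X a b]

end MvPolynomial

theorem Function.Exact.reindex {M N α β R : Type*} [Zero N] [Zero R] (e : α ≃ β)
    {f : M → α → R} {g : (α → R) → N} (h : Exact f g) :
    Exact (fun m => f m ∘ e.symm) fun v => g (v ∘ e) :=
  fun v => (h (v ∘ e)).trans <| exists_congr fun _ => (e.comp_symm_eq _ _).symm

theorem Function.Exact.comp_of_surjective {L M N P : Type*} [Zero P] {f : M → N} {g : N → P}
    (h : Exact f g) {φ : L → M} (hφ : Surjective φ) : Exact (f ∘ φ) g :=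
  fun y => (h y).trans <| by rw [hφ.range_comp]

theorem range_sum_mul_add_sum_mul_eq_span {R ι κ : Type*} [CommRing R] [Fintype ι] [Fintype κ]
    (u : ι → R) (v : κ → R) :
    Set.range (fun g : ι ⊕ κ → R => (∑ i, g (Sum.inl i) * u i) + ∑ c, g (Sum.inr c) * v c) =
      Ideal.span (Set.range u ∪ Set.range v) := by
  ext y
  rw [← Set.Sum.elim_range, SetLike.mem_coe, Ideal.mem_span_range_iff_exists_fun]
  simp only [Set.mem_range, Fintype.sum_sum_type, Sum.elim_inl, Sum.elim_inr]

/-- A graded free resolution is encoded as an exact sequence of explicit matrix maps whose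
entries are homogeneous of the degrees forced by the twists. -/
theorem stmt14_general (d : ℕ) (hd : 5 ≤ d) (k : Type*) [Field k]
    (F : MvPolynomial (Fin 3) k) (f : Fin (d - 3) → MvPolynomial (Fin 3) k)
    (I : Ideal (MvPolynomial (Fin 3) k))
    (HB : ∃ B₁ : Matrix (Fin (d - 3) ⊕ Unit) (Fin (d - 3)) (MvPolynomial (Fin 3) k),
      (∀ i j, (B₁ (Sum.inl i) j).IsHomogeneous 1) ∧
      (∀ j, (B₁ (Sum.inr ()) j).IsHomogeneous 2) ∧
      Function.Injective (fun c : Fin (d - 3) → MvPolynomial (Fin 3) k => B₁.mulVec c) ∧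
      Function.Exact (fun c : Fin (d - 3) → MvPolynomial (Fin 3) k => B₁.mulVec c)
        (fun g : Fin (d - 3) ⊕ Unit → MvPolynomial (Fin 3) k =>
          (∑ i, g (Sum.inl i) * f i) + g (Sum.inr ()) * F) ∧
      Set.range (fun g : Fin (d - 3) ⊕ Unit → MvPolynomial (Fin 3) k =>
          (∑ i, g (Sum.inl i) * f i) + g (Sum.inr ()) * F) = (I : Set (MvPolynomial (Fin 3) k)))
    (L : Ideal (MvPolynomial (Fin 3) k))
    (hL : L = Ideal.span (Set.range f ∪ Set.range fun c : Fin 3 => X c * F)) :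
    ∃ (A : Fin d → MvPolynomial (Fin 3) k)
      (B₂ : Matrix (Fin (d - 3) ⊕ Fin 3) (Fin d) (MvPolynomial (Fin 3) k)),
      (∀ i, (A i).IsHomogeneous 1) ∧
      (∀ i j, (B₂ i j).IsHomogeneous 1) ∧
      Function.Injective (fun r : MvPolynomial (Fin 3) k => fun i : Fin d => A i * r) ∧
      Function.Exact (fun r : MvPolynomial (Fin 3) k => fun i : Fin d => A i * r)
        (fun c : Fin d → MvPolynomial (Fin 3) k => B₂.mulVec c) ∧
      Function.Exact (fun c : Fin d → MvPolynomial (Fin 3) k => B₂.mulVec c)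
        (fun g : Fin (d - 3) ⊕ Fin 3 → MvPolynomial (Fin 3) k =>
          (∑ i, g (Sum.inl i) * f i) + ∑ c : Fin 3, g (Sum.inr c) * (X c * F)) ∧
      Set.range (fun g : Fin (d - 3) ⊕ Fin 3 → MvPolynomial (Fin 3) k =>
          (∑ i, g (Sum.inl i) * f i) + ∑ c : Fin 3, g (Sum.inr c) * (X c * F))
        = (L : Set (MvPolynomial (Fin 3) k)) := by
  obtain ⟨B₁, hlin, hquad, hinj, hex, -⟩ := HB
  choose q hqhom hq using fun j => (hquad j).exists_eq_sum_X_mul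
  let Q := (Matrix.of q)ᵀ
  have hrow : B₁ (Sum.inr ()) = X ᵥ* Q := funext hq
  let M := liftedSyzygyMatrix B₁ Q X
  let e : Fin (d - 3) ⊕ Fin 3 ≃ Fin d := finSumFinEquiv.trans (finCongr (by omega))
  have hM : (fun v => M.submatrix id e.symm *ᵥ v) = fun v => M *ᵥ (v ∘ e) := by
    funext v
    rw [submatrix_mulVec_equiv, Equiv.symm_symm, Function.comp_id]
  let A : Fin d → MvPolynomial (Fin 3) k := Sum.elim 0 X ∘ e.symm
  have hA : (fun r i => A i * r) =
      fun r => Sum.elim (0 : Fin (d - 3) → MvPolynomial (Fin 3) k) (r • X) ∘ e.symm := by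
    funext r i
    simp only [A, Function.comp_apply]
    cases e.symm i <;> simp [mul_comm]
  refine ⟨A, M.submatrix id e.symm, fun i => isHomogeneous_sum_elim_zero_X (e.symm i),
    fun s t => isHomogeneous_liftedSyzygyMatrix_X hlin (fun a j => hqhom j a) s (e.symm t),
    ?_, ?_, ?_, ?_⟩
  · rw [hA]
    exact (e.arrowCongr (Equiv.refl _)).injective.comp
      isKoszulRegular_X.injective_smul_sum_elim_zero
  · rw [hA, hM]
    exact (exact_smul_liftedSyzygyMatrix isKoszulRegular_X hrow hinj).reindex e
  · rw [hM]
    exact (exact_liftedSyzygyMatrix_mulVec isKoszulRegular_X hrow hex).comp_of_surjective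
      (e.arrowCongr (Equiv.refl _)).symm.surjective
  · rw [hL]
    exact range_sum_mul_add_sum_mul_eq_span _ _

/-- The Hilbert–Burch resolution of `I = ⟨f₁,…,f_{d-3},F⟩` and the claimed resolution of
`L = ⟨f₁,…,f_{d-3}, xF, yF, zF⟩` are expressed as exact sequences of explicit maps given by
matrices whose entries are homogeneous of the degrees forced by the graded twists. -/
theorem stmt14 (d : ℕ) (hd : 5 ≤ d) (k : Type*) [Field k]
    (F : MvPolynomial (Fin 3) k) (f : Fin (d - 3) → MvPolynomial (Fin 3) k)
    (hF : F.IsHomogeneous (d - 3)) (hf : ∀ i, (f i).IsHomogeneous (d - 2))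
    (I : Ideal (MvPolynomial (Fin 3) k))
    (hI : I = Ideal.span (Set.range f ∪ {F}))
    (HB : ∃ B₁ : Matrix (Fin (d - 3) ⊕ Unit) (Fin (d - 3)) (MvPolynomial (Fin 3) k),
      (∀ i j, (B₁ (Sum.inl i) j).IsHomogeneous 1) ∧
      (∀ j, (B₁ (Sum.inr ()) j).IsHomogeneous 2) ∧
      Function.Injective (fun c : Fin (d - 3) → MvPolynomial (Fin 3) k => B₁.mulVec c) ∧
      Function.Exact (fun c : Fin (d - 3) → MvPolynomial (Fin 3) k => B₁.mulVec c)
        (fun g : Fin (d - 3) ⊕ Unit → MvPolynomial (Fin 3) k =>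
          (∑ i, g (Sum.inl i) * f i) + g (Sum.inr ()) * F) ∧
      Set.range (fun g : Fin (d - 3) ⊕ Unit → MvPolynomial (Fin 3) k =>
          (∑ i, g (Sum.inl i) * f i) + g (Sum.inr ()) * F) = (I : Set (MvPolynomial (Fin 3) k)))
    (L : Ideal (MvPolynomial (Fin 3) k))
    (hL : L = Ideal.span (Set.range f ∪ Set.range fun c : Fin 3 => X c * F)) :
    ∃ (A : Fin d → MvPolynomial (Fin 3) k)
      (B₂ : Matrix (Fin (d - 3) ⊕ Fin 3) (Fin d) (MvPolynomial (Fin 3) k)),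
      (∀ i, (A i).IsHomogeneous 1) ∧
      (∀ i j, (B₂ i j).IsHomogeneous 1) ∧
      Function.Injective (fun r : MvPolynomial (Fin 3) k => fun i : Fin d => A i * r) ∧
      Function.Exact (fun r : MvPolynomial (Fin 3) k => fun i : Fin d => A i * r)
        (fun c : Fin d → MvPolynomial (Fin 3) k => B₂.mulVec c) ∧
      Function.Exact (fun c : Fin d → MvPolynomial (Fin 3) k => B₂.mulVec c)
        (fun g : Fin (d - 3) ⊕ Fin 3 → MvPolynomial (Fin 3) k =>
          (∑ i, g (Sum.inl i) * f i) + ∑ c : Fin 3, g (Sum.inr c) * (X c * F)) ∧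
      Set.range (fun g : Fin (d - 3) ⊕ Fin 3 → MvPolynomial (Fin 3) k =>
          (∑ i, g (Sum.inl i) * f i) + ∑ c : Fin 3, g (Sum.inr c) * (X c * F))
        = (L : Set (MvPolynomial (Fin 3) k)) :=
  stmt14_general d hd k F f I HB L hL
end

section
/- Let b_1,...,b_d be the homogenized Wachspress numerators b_i = α_i · Π_{j ∉ {i−1,i}} ℓ_j in R = k[x,y,z], where ℓ_j are linear forms and α_i are nonzero scalars. If a quadric Q ∈ k[x_1,...,x_d] satisfies Q(b_1,...,b_d) = 0 and at each vertex v_k (where ℓ_{k-1} = ℓ_k = 0) only b_k is nonzero, and on each open edge only b_k, b_{k+1} are nonzero, then all coefficients of Q on the monomials x_k², x_kx_{k+1} (cyclically adjacent products) are zero; i.e., Q is supported on diagonal monomials x_ix_j with j ∉ {i−1,i,i+1}. -/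
open MvPolynomial

theorem stmt15 (d : ℕ) (hd : 4 ≤ d) [NeZero d] (k : Type*) [Field k]
    (ℓ : Fin d → MvPolynomial (Fin 3) k) (hℓ : ∀ i, (ℓ i).IsHomogeneous 1)
    (α : Fin d → k) (hα : ∀ i, α i ≠ 0)
    (b : Fin d → MvPolynomial (Fin 3) k)
    (hb : ∀ i, b i = C (α i) * ∏ j ∈ Finset.univ.filter (fun j => j ≠ i - 1 ∧ j ≠ i), ℓ j)
    (Q : MvPolynomial (Fin d) k) (hQ2 : Q.IsHomogeneous 2)
    (hQvan : aeval b Q = 0)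
    (hvert : ∀ t : Fin d, ∃ p : Fin 3 → k,
      eval p (b t) ≠ 0 ∧ ∀ i, i ≠ t → eval p (b i) = 0)
    (hedge : ∀ t : Fin d, ∃ r : Fin 3 → k,
      eval r (b t) ≠ 0 ∧ eval r (b (t + 1)) ≠ 0 ∧
        ∀ i, i ≠ t → i ≠ t + 1 → eval r (b i) = 0) :
    ∀ t : Fin d, coeff (Finsupp.single t 2) Q = 0 ∧
      coeff (Finsupp.single t 1 + Finsupp.single (t + 1) 1) Q = 0 := by
  classical
  have hcomp : ∀ p : Fin 3 → k, eval (fun i => eval p (b i)) Q = 0 := by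
    intro p
    have h := map_aeval b (eval p) Q
    rw [hQvan, map_zero] at h
    have he : ((eval p).comp (algebraMap k (MvPolynomial (Fin 3) k))) = RingHom.id k := by
      ext a; simp [MvPolynomial.algebraMap_eq]
    rw [he] at h
    rw [show (eval fun i => eval p (b i)) = eval₂Hom (RingHom.id k) (fun i => eval p (b i)) from rfl]
    exact h.symm
  have hdeg : ∀ m ∈ Q.support, ∑ i ∈ m.support, m i = 2 := by
    intro m hm
    have := hQ2 (mem_support_iff.mp hm)
    simpa [Finsupp.weight, Finsupp.linearCombination, Finsupp.sum] using this
  -- main evaluation identity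
  have hsum : ∀ p : Fin 3 → k,
      ∑ m ∈ Q.support, coeff m Q * ∏ i ∈ m.support, (eval p (b i)) ^ m i = 0 := by
    intro p
    rw [← MvPolynomial.eval_eq]
    exact hcomp p
  -- first: squares
  have hsq : ∀ t : Fin d, coeff (Finsupp.single t 2) Q = 0 := by
    intro t
    obtain ⟨p, hp0, hp⟩ := hvert t
    by_cases hmem : Finsupp.single t 2 ∈ Q.support
    · have hsingle : ∀ m ∈ Q.support, m ≠ Finsupp.single t 2 →
          coeff m Q * ∏ i ∈ m.support, (eval p (b i)) ^ m i = 0 := by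
        intro m hm hne
        by_cases hsub : m.support ⊆ {t}
        · exfalso
          apply hne
          have hm' := Finsupp.support_subset_singleton.mp hsub
          have h2 : m t = 2 := by
            have hd2 := hdeg m hm
            rwa [Finset.sum_subset hsub (fun x _ hx => Finsupp.notMem_support_iff.mp hx),
              Finset.sum_singleton] at hd2
          rw [hm', h2]
        · obtain ⟨i, hi, hit⟩ := Finset.not_subset.mp hsub
          have : (eval p (b i)) ^ m i = 0 := by
            rw [hp i (by simpa using hit)]
            exact zero_pow (Finsupp.mem_support_iff.mp hi)
          rw [Finset.prod_eq_zero hi this, mul_zero]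
      have h := hsum p
      rw [Finset.sum_eq_single_of_mem _ hmem hsingle] at h
      have hprod : ∏ i ∈ (Finsupp.single t 2).support, (eval p (b i)) ^ (Finsupp.single t 2) i
          = (eval p (b t)) ^ 2 := by
        rw [Finsupp.support_single_ne_zero _ (by norm_num)]
        simp
      rw [hprod] at h
      exact (mul_eq_zero.mp h).resolve_right (pow_ne_zero _ hp0)
    · simpa using mem_support_iff.not.mp hmem
  intro t
  refine ⟨hsq t, ?_⟩
  have htne : t ≠ t + 1 := by
    intro h
    have h0 : (1 : Fin d) = 0 := by
      have h' : t + 1 = t + 0 := by rw [add_zero]; exact h.symm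
      exact add_left_cancel h'
    have := Fin.one_eq_zero_iff.mp h0
    omega
  obtain ⟨r, hr1, hr2, hr⟩ := hedge t
  set m0 : Fin d →₀ ℕ := Finsupp.single t 1 + Finsupp.single (t + 1) 1 with hm0
  by_cases hmem : m0 ∈ Q.support
  · have hsingle : ∀ m ∈ Q.support, m ≠ m0 →
        coeff m Q * ∏ i ∈ m.support, (eval r (b i)) ^ m i = 0 := by
      intro m hm hne
      by_cases hsub : m.support ⊆ {t, t + 1}
      · -- m is supported on {t, t+1} with total degree 2
        have hmt : ∀ i, i ≠ t → i ≠ t + 1 → m i = 0 := by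
          intro i h1 h2
          by_contra h
          have := hsub (Finsupp.mem_support_iff.mpr h)
          simp [h1, h2] at this
        have hsum2 : m t + m (t + 1) = 2 := by
          have h := hdeg m hm
          have : ∑ i ∈ m.support, m i = m t + m (t+1) := by
            rw [Finset.sum_subset hsub ?_, Finset.sum_pair htne]
            intro x _ hx
            simpa using Finsupp.notMem_support_iff.mp hx
          omega
        have hcases : m = Finsupp.single t 2 ∨ m = Finsupp.single (t+1) 2 ∨ m = m0 := by
          rcases Nat.lt_or_ge (m t) 1 with h1 | h1
          · right; left
            ext i
            rcases eq_or_ne i t with rfl | hit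
            · simp [Finsupp.single_apply, htne.symm]; omega
            · rcases eq_or_ne i (t+1) with rfl | hit1
              · simp [Finsupp.single_apply]; omega
              · simp [Finsupp.single_apply, Ne.symm hit1, hmt i hit hit1]
          · rcases Nat.lt_or_ge (m t) 2 with h2 | h2
            · right; right
              ext i
              rcases eq_or_ne i t with rfl | hit
              · simp [hm0, Finsupp.single_apply, htne.symm]; omega
              · rcases eq_or_ne i (t+1) with rfl | hit1
                · simp only [hm0, Finsupp.add_apply, Finsupp.single_apply, if_neg htne,
                    if_pos rfl, ite_true]
                  omega
                · simp [hm0, Finsupp.single_apply, Ne.symm hit, Ne.symm hit1, hmt i hit hit1]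
            · left
              ext i
              rcases eq_or_ne i t with rfl | hit
              · simp [Finsupp.single_apply]; omega
              · rcases eq_or_ne i (t+1) with rfl | hit1
                · simp only [Finsupp.single_apply, if_neg htne]
                  omega
                · simp [Finsupp.single_apply, Ne.symm hit, hmt i hit hit1]
        rcases hcases with h | h | h
        · rw [h, hsq t, zero_mul]
        · rw [h, hsq (t+1), zero_mul]
        · exact absurd h hne
      · obtain ⟨i, hi, hit⟩ := Finset.not_subset.mp hsub
        simp only [Finset.mem_insert, Finset.mem_singleton, not_or] at hit
        have : (eval r (b i)) ^ m i = 0 := by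
          rw [hr i hit.1 hit.2]
          exact zero_pow (Finsupp.mem_support_iff.mp hi)
        rw [Finset.prod_eq_zero hi this, mul_zero]
    have h := hsum r
    rw [Finset.sum_eq_single_of_mem _ hmem hsingle] at h
    have hm0t : m0 t = 1 := by simp [hm0, Finsupp.single_apply, htne.symm]
    have hm0t1 : m0 (t+1) = 1 := by simp [hm0, Finsupp.single_apply, htne]
    have hm0supp : m0.support = {t, t+1} := by
      ext i
      rcases eq_or_ne i t with rfl | hit
      · simp [Finsupp.mem_support_iff, hm0t]
      · rcases eq_or_ne i (t+1) with rfl | hit1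
        · simp [Finsupp.mem_support_iff, hm0t1]
        · simp [Finsupp.mem_support_iff, hm0, Finsupp.single_apply, Ne.symm hit, Ne.symm hit1,
            hit, hit1]
    rw [hm0supp, Finset.prod_pair htne, hm0t, hm0t1, pow_one, pow_one] at h
    rcases mul_eq_zero.mp h with h | h
    · exact h
    · exact absurd h (mul_ne_zero hr1 hr2)
  · simpa using mem_support_iff.not.mp hmem
end

section
/- For a hexagon (d=6) with n_m := v_m × v_{m+1} and normalized variables, |Λ_1 Λ_3 Λ_5| = |n_2 n_4 n_6|·(x_2x_4x_6 − x_1x_3x_5), where Λ_r = x_{r+1}n_{r+1} − x_r n_{r-1} (indices mod 6); moreover |n_2 n_4 n_6| = |n_6 n_2 n_4|, so the two surviving coefficients in the determinant expansion are equal. -/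
open Matrix MvPolynomial

section ThreeRows

variable {R : Type*} [CommRing R]

theorem det_fin_three_rotate_rows (a b c : Fin 3 → R) :
    (of ![c, a, b]).det = (of ![a, b, c]).det := by
  simp only [det_fin_three, of_apply, cons_val_zero, cons_val_one, cons_val_two, head_cons,
    tail_cons]
  ring

/- In the multilinear expansion of the left-hand side, six of the eight terms have a repeated
row; the two survivors are `(a, b, c)` and `(c, a, b)`, which have the same determinant. -/
theorem det_fin_three_cyclic_sub_smul (a b c : Fin 3 → R) (x₁ x₂ x₃ y₁ y₂ y₃ : R) :
    (of ![x₁ • a - y₁ • c, x₂ • b - y₂ • a, x₃ • c - y₃ • b]).det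
      = (x₁ * x₂ * x₃ - y₁ * y₂ * y₃) * (of ![a, b, c]).det := by
  simp only [det_fin_three, of_apply, cons_val_zero, cons_val_one, cons_val_two, head_cons,
    tail_cons, Pi.sub_apply, Pi.smul_apply, smul_eq_mul]
  ring

theorem det_fin_three_map {S : Type*} [CommRing S] (f : R →+* S) (a b c : Fin 3 → R) :
    (of ![f ∘ a, f ∘ b, f ∘ c]).det = f (of ![a, b, c]).det := by
  rw [RingHom.map_det]
  congr 1
  ext i j
  fin_cases i <;> rfl

end ThreeRows

theorem stmt17_general (n : Fin 6 → Fin 3 → ℝ)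
    (Λ : Fin 6 → Fin 3 → MvPolynomial (Fin 6) ℝ)
    (hΛ : ∀ (r : Fin 6) (c : Fin 3),
      Λ r c = X (r + 1) * C (n (r + 1) c) - X r * C (n (r - 1) c)) :
    (Matrix.of ![Λ 0, Λ 2, Λ 4]).det
        = C (det3 (n 1) (n 3) (n 5)) * (X 1 * X 3 * X 5 - X 0 * X 2 * X 4) ∧
      det3 (n 1) (n 3) (n 5) = det3 (n 5) (n 1) (n 3) := by
  have hΛ' : ∀ r, Λ r = (X (r + 1) : MvPolynomial (Fin 6) ℝ) • (C ∘ n (r + 1))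
      - (X r : MvPolynomial (Fin 6) ℝ) • (C ∘ n (r - 1)) := fun r ↦ by
    funext c
    simp only [hΛ, Pi.sub_apply, Pi.smul_apply, Function.comp_apply, smul_eq_mul]
  refine ⟨?_, (det_fin_three_rotate_rows (n 1) (n 3) (n 5)).symm⟩
  rw [hΛ' 0, hΛ' 2, hΛ' 4, det3, ← det_fin_three_map C, mul_comm]
  exact det_fin_three_cyclic_sub_smul (C ∘ n 1) (C ∘ n 3) (C ∘ n 5) _ _ _ _ _ _

/-- Variables `X 0, …, X 5` correspond to `x_1, …, x_6` (indices shifted down by one,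
cyclically in `Fin 6`). -/
theorem stmt17 (v n : Fin 6 → Fin 3 → ℝ)
    (hn : ∀ m, n m = crossProduct (v m) (v (m + 1)))
    (Λ : Fin 6 → Fin 3 → MvPolynomial (Fin 6) ℝ)
    (hΛ : ∀ (r : Fin 6) (c : Fin 3),
      Λ r c = X (r + 1) * C (n (r + 1) c) - X r * C (n (r - 1) c)) :
    (Matrix.of ![Λ 0, Λ 2, Λ 4]).det
        = C (det3 (n 1) (n 3) (n 5)) * (X 1 * X 3 * X 5 - X 0 * X 2 * X 4) ∧
      det3 (n 1) (n 3) (n 5) = det3 (n 5) (n 1) (n 3) :=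
  stmt17_general n Λ hΛ
end

section
/- Let I be a homogeneous ideal in S = k[x_1,...,x_d] whose degree-2 part has a basis of the form {x_1x_{i} + ζ_i : 3 ≤ i ≤ d−1} where each ζ_i ∈ k[x_2,...,x_d]_2. Then any linear syzygy Σ λ_i (x_1x_i + ζ_i) = 0 with λ_i ∈ S_1 must have each λ_i in the span of x_3,...,x_{d-1} arising from Koszul relations; in particular, if for every cyclic shift of the variable order the degree-2 part admits an analogous basis {x_rx_s + ζ'_s} with ζ'_s free of x_r, then the degree-2 part of I admits no nonzero linear first syzygy. -/
open MvPolynomial Fin.NatCast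

/-!
Fix a variable `x_r` and let `c_m` be the `x_r`-coefficient of the linear form `λ_m`. Every form in
the span of the `Q_m` is a combination of the `T_n = x_r x_{j n} + ζ_n`, so it has degree at most
one in `x_r`, and its `T`-coordinates are its coefficients of `x_r x_{j n}`. Reading off the
coefficient of `x_r ^ 2 x_{j n}` in `∑ λ_m Q_m = 0` therefore shows that `∑ c_m Q_m` has all
`T`-coordinates zero, so it vanishes. The `Q_m` are linearly independent, since they span the same
space as the independent `T_n`, hence all `c_m` vanish. As `r` is arbitrary, every `λ_m` is zero.
-/

namespace MvPolynomial

open Finsupp Submodule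

variable {σ R : Type*} [CommSemiring R]

theorem IsHomogeneous.exists_single_eq_of_coeff_ne_zero {p : MvPolynomial σ R}
    (hp : p.IsHomogeneous 1) {s : σ →₀ ℕ} (hs : coeff s p ≠ 0) : ∃ i, single i 1 = s := by
  have hdeg : s.degree = 1 := by
    by_contra h
    exact hs (hp.coeff_eq_zero h)
  rwa [← Set.mem_range, Finsupp.range_single_one]

theorem IsHomogeneous.eq_zero_of_forall_coeff_single_eq_zero {p : MvPolynomial σ R}
    (hp : p.IsHomogeneous 1) (h : ∀ i, coeff (single i 1) p = 0) : p = 0 := by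
  ext s
  by_contra hs
  obtain ⟨i, rfl⟩ := hp.exists_single_eq_of_coeff_ne_zero hs
  exact hs (h i)

theorem coeff_eq_zero_of_degreeOf_lt {p : MvPolynomial σ R} {r : σ} {s : σ →₀ ℕ}
    (h : p.degreeOf r < s r) : coeff s p = 0 := by
  by_contra hs
  exact (monomial_le_degreeOf r (mem_support_iff.2 hs)).not_gt h

theorem coeff_single_add_mul_of_isHomogeneous_one {l q : MvPolynomial σ R}
    (hl : l.IsHomogeneous 1) {r : σ} (hq : q.degreeOf r ≤ 1) {u : σ →₀ ℕ} (hu : u r ≠ 0) :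
    coeff (single r 1 + u) (l * q) = coeff (single r 1) l * coeff u q := by
  classical
  rw [coeff_mul, Finset.sum_eq_single_of_mem (single r 1, u) (by simp)]
  rintro ⟨a, b⟩ hab hne
  simp only [Finset.HasAntidiagonal.mem_antidiagonal] at hab ⊢
  by_cases ha : coeff a l = 0
  · rw [ha, zero_mul]
  obtain ⟨t, rfl⟩ := hl.exists_single_eq_of_coeff_ne_zero ha
  have htr : t ≠ r := by
    rintro rfl
    exact hne (by rw [add_left_cancel hab])
  have hb : b r = 1 + u r := by
    simpa [single_apply, htr] using congrArg (· r) hab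
  rw [coeff_eq_zero_of_degreeOf_lt (p := q) (r := r) (by omega), mul_zero]

theorem coeff_eq_zero_of_notMem_vars {p : MvPolynomial σ R} {r : σ} (hp : r ∉ p.vars)
    {s : σ →₀ ℕ} (hs : s r ≠ 0) : coeff s p = 0 := by
  by_contra h
  exact hs (mem_support_notMem_vars_zero (mem_support_iff.2 h) hp)

section

variable {ι : Type*} {r : σ} {j : ι → σ} {ζ : ι → MvPolynomial σ R}

theorem coeff_sum_smul_X_mul_X_add [Fintype ι] (hj : Function.Injective j) (hjr : ∀ m, j m ≠ r)
    (hζ : ∀ m, r ∉ (ζ m).vars) (a : ι → R) (n : ι) :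
    coeff (single r 1 + single (j n) 1) (∑ m, a m • (X r * X (j m) + ζ m)) = a n := by
  classical
  have hX (m : ι) : coeff (single r 1 + single (j n) 1) (X r * X (j m) : MvPolynomial σ R) =
      if n = m then 1 else 0 := by
    rw [X, X, monomial_mul, one_mul, coeff_monomial]
    simp [single_left_inj one_ne_zero, hj.eq_iff, eq_comm]
  have hζ0 (m : ι) : coeff (single r 1 + single (j n) 1) (ζ m) = 0 :=
    coeff_eq_zero_of_notMem_vars (hζ m) (by simp [hjr n])
  simp [coeff_sum, hX, hζ0]

theorem degreeOf_le_one_of_mem_span [Nontrivial R] (hjr : ∀ m, j m ≠ r)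
    (hζ : ∀ m, r ∉ (ζ m).vars) {q : MvPolynomial σ R}
    (hq : q ∈ span R (Set.range fun m => X r * X (j m) + ζ m)) : q.degreeOf r ≤ 1 := by
  induction hq using Submodule.span_induction with
  | mem _ h =>
    obtain ⟨m, rfl⟩ := h
    have hXX : degreeOf r (X r * X (j m) : MvPolynomial σ R) ≤ 1 := by
      simpa [degreeOf_X_of_ne (hjr m).symm] using
        degreeOf_mul_le r (X r : MvPolynomial σ R) (X (j m))
    have hζ0 : degreeOf r (ζ m) = 0 := by simpa [mem_vars_iff_degreeOf_ne_zero] using hζ m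
    exact (degreeOf_add_le r _ _).trans (max_le hXX (hζ0 ▸ zero_le_one))
  | zero => simp [degreeOf_zero]
  | add p q _ _ hp hq => exact (degreeOf_add_le r p q).trans (max_le hp hq)
  | smul c p _ hp => exact (smul_eq_C_mul p c ▸ degreeOf_C_mul_le p r c).trans hp

end

theorem coeff_single_eq_zero_of_linear_syzygy {k ι : Type*} [Field k] [Fintype ι] {r : σ}
    {j : ι → σ} {ζ : ι → MvPolynomial σ k} (hj : Function.Injective j) (hjr : ∀ m, j m ≠ r)
    (hζ : ∀ m, r ∉ (ζ m).vars) {Q : ι → MvPolynomial σ k}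
    (hspan : span k (Set.range fun m => X r * X (j m) + ζ m) = span k (Set.range Q))
    {l : ι → MvPolynomial σ k} (hl : ∀ m, (l m).IsHomogeneous 1) (hsyz : ∑ m, l m * Q m = 0)
    (m : ι) : coeff (single r 1) (l m) = 0 := by
  set T : ι → MvPolynomial σ k := fun m => X r * X (j m) + ζ m
  have hT : LinearIndependent k T := Fintype.linearIndependent_iff.2 fun a ha n => by
    rw [← coeff_sum_smul_X_mul_X_add hj hjr hζ a n, ha, coeff_zero]
  have hQ : LinearIndependent k Q := by
    rw [linearIndependent_iff_card_eq_finrank_span, Set.finrank, ← hspan, finrank_span_eq_card hT]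
  have hQdeg (m : ι) : (Q m).degreeOf r ≤ 1 :=
    degreeOf_le_one_of_mem_span hjr hζ (hspan ▸ subset_span ⟨m, rfl⟩)
  set c : ι → k := fun m => coeff (single r 1) (l m)
  have hP : ∑ m, c m • Q m ∈ span k (Set.range T) :=
    hspan ▸ sum_mem fun m _ => smul_mem _ (c m) (subset_span ⟨m, rfl⟩)
  obtain ⟨a, ha⟩ := (mem_span_range_iff_exists_fun k).1 hP
  -- The `T`-coordinates of `∑ c m • Q m` are the coefficients of `x_r ^ 2 * x_{j n}` in the syzygy.
  have ha0 (n : ι) : a n = 0 := by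
    rw [← coeff_sum_smul_X_mul_X_add hj hjr hζ a n, ha]
    calc coeff (single r 1 + single (j n) 1) (∑ m, c m • Q m)
        = coeff (single r 1 + (single r 1 + single (j n) 1)) (∑ m, l m * Q m) := by
          simp only [coeff_sum, coeff_smul, smul_eq_mul]
          refine Finset.sum_congr rfl fun m _ => ?_
          rw [coeff_single_add_mul_of_isHomogeneous_one (hl m) (hQdeg m) (by simp)]
      _ = 0 := by rw [hsyz, coeff_zero]
  have hP0 : ∑ m, c m • Q m = 0 := by simp [← ha, ha0]
  exact Fintype.linearIndependent_iff.1 hQ c hP0 m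

end MvPolynomial

theorem Fin.add_natCast_ne_self {d : ℕ} [NeZero d] (r : Fin d) {i : ℕ} (h0 : 0 < i)
    (hi : i < d) : r + (i : Fin d) ≠ r := by
  intro h
  have hi0 : (i : Fin d) = 0 := by simpa using h
  exact Nat.not_dvd_of_pos_of_lt h0 hi (Fin.natCast_eq_zero.1 hi0)

theorem Fin.add_natCast_injOn {d : ℕ} [NeZero d] (r : Fin d) :
    Set.InjOn (fun i : ℕ => r + (i : Fin d)) (Set.Iio d) := by
  intro a ha b hb h
  simpa [Fin.val_cast_of_lt ha, Fin.val_cast_of_lt hb] using congrArg Fin.val (add_left_cancel h)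

theorem stmt19_general (d : ℕ) [NeZero d] (k : Type*) [Field k]
    (Q : Fin (d - 3) → MvPolynomial (Fin d) k)
    (hbasis : ∀ r : Fin d, ∃ T ζ : Fin (d - 3) → MvPolynomial (Fin d) k,
      Submodule.span k (Set.range T) = Submodule.span k (Set.range Q) ∧
      (∀ m : Fin (d - 3), T m = X r * X (r + 2 + ((m : ℕ) : Fin d)) + ζ m) ∧
      (∀ m, (ζ m).IsHomogeneous 2) ∧ (∀ m, r ∉ (ζ m).vars)) :
    ∀ lam : Fin (d - 3) → MvPolynomial (Fin d) k,
      (∀ m, (lam m).IsHomogeneous 1) → ∑ m, lam m * Q m = 0 → lam = 0 := by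
  intro lam hlam hsyz
  funext i
  refine (hlam i).eq_zero_of_forall_coeff_single_eq_zero fun r => ?_
  obtain ⟨T, ζ, hspan, hT, -, hζ⟩ := hbasis r
  obtain rfl : T = fun m : Fin (d - 3) => X r * X (r + 2 + ((m : ℕ) : Fin d)) + ζ m := funext hT
  have hshift (m : Fin (d - 3)) : r + 2 + ((m : ℕ) : Fin d) = r + ((m + 2 : ℕ) : Fin d) := by
    push_cast
    rw [add_assoc, add_comm 2]
  have hlt (m : Fin (d - 3)) : (m : ℕ) + 2 < d := by omega
  refine coeff_single_eq_zero_of_linear_syzygy (fun m n h => ?_) (fun m => ?_) hζ hspan hlam hsyz i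
  · rw [hshift, hshift] at h
    have := Fin.add_natCast_injOn r (hlt m) (hlt n) h
    ext; omega
  · rw [hshift]
    exact Fin.add_natCast_ne_self r (by omega) (hlt m)

theorem stmt19 (d : ℕ) (hd : 6 ≤ d) [NeZero d] (k : Type*) [Field k]
    (Q : Fin (d - 3) → MvPolynomial (Fin d) k)
    (hQhom : ∀ m, (Q m).IsHomogeneous 2)
    (hbasis : ∀ r : Fin d, ∃ T ζ : Fin (d - 3) → MvPolynomial (Fin d) k,
      Submodule.span k (Set.range T) = Submodule.span k (Set.range Q) ∧
      (∀ m : Fin (d - 3), T m = X r * X (r + 2 + ((m : ℕ) : Fin d)) + ζ m) ∧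
      (∀ m, (ζ m).IsHomogeneous 2) ∧ (∀ m, r ∉ (ζ m).vars)) :
    ∀ lam : Fin (d - 3) → MvPolynomial (Fin d) k,
      (∀ m, (lam m).IsHomogeneous 1) → ∑ m, lam m * Q m = 0 → lam = 0 :=
  stmt19_general d k Q hbasis
end
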